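/- If f : (X,𝒯₁) → (Y,𝒯₂) is L-fuzzy almost open, then f is L-fuzzy weakly Semi-Preopen. -/
import Mathlib


namespace LFuzzy

/-- A (complete) DeMorgan structure on a complete lattice: an order-reversing involution. -/
structure DeMorgan (L : Type*) [CompleteLattice L] where
  compl : L → L
  compl_antitone : ∀ a b : L, a ≤ b → compl b ≤ compl a
  compl_involutive : ∀ a : L, compl (compl a) = a

variable {L X Y : Type*} [CompleteLattice L]

/-- Pointwise DeMorgan complement of an L-fuzzy subset. -/
def pcompl (c : DeMorgan L) (U : X → L) : X → L := fun x => c.compl (U x)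

/-- An L-fuzzy topology on X. -/
def IsTopology (T : (X → L) → L) : Prop :=
  T ⊥ = ⊤ ∧ T ⊤ = ⊤ ∧ (∀ U V : X → L, T U ⊓ T V ≤ T (U ⊓ V)) ∧
    ∀ S : Set (X → L), (⨅ U ∈ S, T U) ≤ T (sSup S)

/-- r-fuzzy closure operator. -/
def cl (c : DeMorgan L) (T : (X → L) → L) (U : X → L) (r : L) : X → L :=
  sInf {V | U ≤ V ∧ r ≤ T (pcompl c V)}

/-- r-fuzzy interior operator. -/
def intr (T : (X → L) → L) (U : X → L) (r : L) : X → L :=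
  sSup {V | V ≤ U ∧ r ≤ T V}

/-- r-fuzzy Semi-Preopen. -/
def SPO (c : DeMorgan L) (T : (X → L) → L) (U : X → L) (r : L) : Prop :=
  U ≤ cl c T (intr T (cl c T U r) r) r

/-- r-fuzzy Semi-Preclosed. -/
def SPC (c : DeMorgan L) (T : (X → L) → L) (U : X → L) (r : L) : Prop :=
  intr T (cl c T (intr T U r) r) r ≤ U

/-- Semi-Preinterior. -/
def spInt (c : DeMorgan L) (T : (X → L) → L) (V : X → L) (r : L) : X → L :=
  sSup {W | W ≤ V ∧ SPO c T W r}

/-- Semi-Preclosure. -/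
def spCl (c : DeMorgan L) (T : (X → L) → L) (V : X → L) (r : L) : X → L :=
  sInf {W | V ≤ W ∧ SPC c T W r}

/-- r-fuzzy θ-closure. -/
def thCl (c : DeMorgan L) (T : (X → L) → L) (U : X → L) (r : L) : X → L :=
  sInf {V | U ≤ intr T V r ∧ r ≤ T (pcompl c V)}

/-- r-fuzzy θ-interior. -/
def thInt (c : DeMorgan L) (T : (X → L) → L) (U : X → L) (r : L) : X → L :=
  sSup {V | cl c T V r ≤ U ∧ r ≤ T V}

/-- Image L-fuzzy set operator induced by f. -/
def im (f : X → Y) (U : X → L) : Y → L := fun y => ⨆ x, ⨆ _ : f x = y, U x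

/-- Preimage L-fuzzy set operator induced by f. -/
def pre (f : X → Y) (V : Y → L) : X → L := fun x => V (f x)

/-- L-fuzzy weakly open function. -/
def WeaklyOpen (c : DeMorgan L) (T₁ : (X → L) → L) (T₂ : (Y → L) → L) (f : X → Y) : Prop :=
  ∀ (U : X → L) (r : L), r ≠ ⊥ → r ≤ T₁ U →
    im f U ≤ intr T₂ (im f (cl c T₁ U r)) r

/-- L-fuzzy weakly Semi-Preopen function. -/
def WeaklySPOpen (c : DeMorgan L) (T₁ : (X → L) → L) (T₂ : (Y → L) → L) (f : X → Y) : Prop :=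
  ∀ (U : X → L) (r : L), r ≠ ⊥ → r ≤ T₁ U →
    im f U ≤ spInt c T₂ (im f (cl c T₁ U r)) r

/-- L-fuzzy weakly Semi-Preclosed function. -/
def WeaklySPClosed (c : DeMorgan L) (T₁ : (X → L) → L) (T₂ : (Y → L) → L) (f : X → Y) : Prop :=
  ∀ (U : X → L) (r : L), r ≠ ⊥ → r ≤ T₁ (pcompl c U) →
    spCl c T₂ (im f (intr T₁ U r)) r ≤ im f U

/-- L-fuzzy strongly continuous function. -/
def StronglyCont (c : DeMorgan L) (T₁ : (X → L) → L) (f : X → Y) : Prop :=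
  ∀ (U : X → L) (r : L), r ≠ ⊥ → im f (cl c T₁ U r) ≤ im f U

/-- Quasi-coincidence of two L-fuzzy subsets. -/
def Quasi (c : DeMorgan L) (A B : X → L) : Prop := ∃ x, ¬ A x ≤ c.compl (B x)

end LFuzzy

open LFuzzy

variable {L X Y : Type*}

/-- L-fuzzy almost open function. -/
def AlmostOpen [CompleteLattice L] (c : DeMorgan L) (T₁ : (X → L) → L)
    (T₂ : (Y → L) → L) (f : X → Y) : Prop :=
  ∀ (U : X → L) (r : L), r ≠ ⊥ → U = intr T₁ (cl c T₁ U r) r → r ≤ T₂ (im f U)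


section Aux
variable {L X Y : Type*} [CompleteLattice L]

lemma intr_le' (T : (X → L) → L) (U : X → L) (r : L) : intr T U r ≤ U :=
  sSup_le fun _ hV => hV.1

lemma le_cl' (c : DeMorgan L) (T : (X → L) → L) (U : X → L) (r : L) : U ≤ cl c T U r :=
  le_sInf fun _ hV => hV.1

lemma intr_mono' (T : (X → L) → L) {U V : X → L} (r : L) (h : U ≤ V) :
    intr T U r ≤ intr T V r :=
  sSup_le fun W hW => le_sSup ⟨hW.1.trans h, hW.2⟩

lemma r_le_T_intr (T : (X → L) → L) (hT : IsTopology T) (U : X → L) (r : L) :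
    r ≤ T (intr T U r) := by
  refine le_trans ?_ (hT.2.2.2 {V | V ≤ U ∧ r ≤ T V})
  exact le_iInf₂ fun V hV => hV.2

lemma pcompl_sInf (c : DeMorgan L) (S : Set (X → L)) :
    pcompl c (sInf S) = sSup (pcompl c '' S) := by
  funext x
  have hsup : sSup (pcompl c '' S) x = ⨆ V ∈ S, c.compl (V x) := by
    rw [sSup_apply]
    apply le_antisymm
    · exact iSup_le fun ⟨g, hg⟩ => by
        obtain ⟨V, hV, rfl⟩ := hg
        exact le_iSup₂ (f := fun V (_ : V ∈ S) => c.compl (V x)) V hV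
    · exact iSup₂_le fun V hV =>
        le_iSup (fun g : ↥(pcompl c '' S) => (g : X → L) x) ⟨pcompl c V, Set.mem_image_of_mem _ hV⟩
  have hinf : sInf S x = ⨅ V ∈ S, V x := by
    rw [sInf_apply]
    apply le_antisymm
    · exact le_iInf₂ fun V hV =>
        iInf_le (fun g : ↥S => (g : X → L) x) ⟨V, hV⟩
    · exact le_iInf fun ⟨g, hg⟩ => iInf₂_le g hg
  show c.compl (sInf S x) = sSup (pcompl c '' S) x
  rw [hsup, hinf]
  apply le_antisymm
  · have h1 : c.compl (⨆ V ∈ S, c.compl (V x)) ≤ ⨅ V ∈ S, V x := by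
      refine le_iInf₂ fun V hV => ?_
      have := c.compl_antitone _ _ (le_iSup₂ (f := fun V (_ : V ∈ S) => c.compl (V x)) V hV)
      simpa [c.compl_involutive] using this
    have := c.compl_antitone _ _ h1
    simpa [c.compl_involutive] using this
  · refine iSup₂_le fun V hV => ?_
    exact c.compl_antitone _ _ (iInf₂_le V hV)

lemma r_le_T_pcompl_cl (c : DeMorgan L) (T : (X → L) → L) (hT : IsTopology T)
    (U : X → L) (r : L) : r ≤ T (pcompl c (cl c T U r)) := by
  rw [cl, pcompl_sInf]
  refine le_trans ?_ (hT.2.2.2 _)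
  refine le_iInf₂ fun W hW => ?_
  obtain ⟨V, hV, rfl⟩ := hW
  exact hV.2

lemma cl_le_of_closed (c : DeMorgan L) (T : (X → L) → L) {U A : X → L} {r : L}
    (h1 : U ≤ A) (h2 : r ≤ T (pcompl c A)) : cl c T U r ≤ A :=
  sInf_le ⟨h1, h2⟩

lemma im_mono' (f : X → Y) {U V : X → L} (h : U ≤ V) : im f U ≤ im f V :=
  fun y => iSup₂_mono fun x _ => h x

end Aux

theorem stmt15 [CompleteLattice L] (c : DeMorgan L)
    (T₁ : (X → L) → L) (T₂ : (Y → L) → L) (hT₁ : IsTopology T₁) (hT₂ : IsTopology T₂)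
    (f : X → Y) (h : AlmostOpen c T₁ T₂ f) :
    WeaklySPOpen c T₁ T₂ f := by
  intro U r hr hU
  set A := cl c T₁ U r with hA
  set V := intr T₁ A r with hV
  have hUV : U ≤ V := le_sSup ⟨le_cl' c T₁ U r, hU⟩
  have hVA : V ≤ A := intr_le' T₁ A r
  -- V is r-fuzzy regular open
  have hreg : V = intr T₁ (cl c T₁ V r) r := by
    apply le_antisymm
    · exact le_sSup ⟨le_cl' c T₁ V r, r_le_T_intr T₁ hT₁ A r⟩
    · have hclV : cl c T₁ V r ≤ A :=
        cl_le_of_closed c T₁ hVA (r_le_T_pcompl_cl c T₁ hT₁ U r)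
      exact intr_mono' T₁ r hclV
  have hTV : r ≤ T₂ (im f V) := h V r hr hreg
  -- im f V is r-fuzzy Semi-Preopen
  have hSPO : SPO c T₂ (im f V) r := by
    refine le_trans ?_ (le_cl' c T₂ _ r)
    exact le_sSup ⟨le_cl' c T₂ _ r, hTV⟩
  refine le_trans (im_mono' f hUV) ?_
  exact le_sSup ⟨im_mono' f hVA, hSPO⟩
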